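/- Let F be a finite field of cardinality c, m, n be positive integers, and A ∈ M_{m×n}(F) be a matrix of rank 2. Let d be a 1-dimensional subspace of F^n and e a 1-dimensional subspace of ᵗF^m. Then: (1) the set of matrices in R_d that are adjacent to A is either empty or has exactly c elements, and it has exactly c elements when m = n = 2; (2) the same holds for the set of matrices in L_e that are adjacent to A; (3) the set of rank 1 matrices in A + R_d is either empty or has exactly c elements, and it has exactly c elements when m = n = 2; (4) the same holds for the set of rank 1 matrices in A + L_e. -/

import Mathlib

open Matrix

variable {D : Type*} [DivisionRing D]

/-- The rank of a matrix over a division ring: the dimension of its row space,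
i.e. of the left `D`-subspace of `D^n` spanned by the rows. -/
noncomputable def rowRank {m n : ℕ} (A : Matrix (Fin m) (Fin n) D) : ℕ :=
  Module.finrank D (Submodule.span D (Set.range fun i => A i))

/-- Two matrices are adjacent if their difference has rank one. -/
def Adjacent {m n : ℕ} (A B : Matrix (Fin m) (Fin n) D) : Prop :=
  rowRank (A - B) = 1

/-- `R(x)`: the set of matrices of the form `ᵗu x` for a fixed row vector `x`. -/
def Rvec {m n : ℕ} (x : Fin n → D) : Set (Matrix (Fin m) (Fin n) D) :=
  { M | ∃ u : Fin m → D, ∀ i j, M i j = u i * x j }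

/-- `L(ᵗy)`: the set of matrices of the form `ᵗy v` for a fixed column vector `ᵗy`. -/
def Lvec {m n : ℕ} (y : Fin m → D) : Set (Matrix (Fin m) (Fin n) D) :=
  { M | ∃ v : Fin n → D, ∀ i j, M i j = y i * v j }

/-- `R_d`: the matrices whose row space is contained in `d`. -/
def Rsub {m n : ℕ} (d : Submodule D (Fin n → D)) : Set (Matrix (Fin m) (Fin n) D) :=
  { M | ∀ i, M i ∈ d }

/-- `L_e`: the matrices whose column space (a right subspace, i.e. a `Dᵐᵒᵖ`-submodule)
is contained in `e`. -/
def Lsub {m n : ℕ} (e : Submodule Dᵐᵒᵖ (Fin m → D)) : Set (Matrix (Fin m) (Fin n) D) :=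
  { M | ∀ j, (fun i => M i j) ∈ e }

/-- The orthogonal set of a set `e` of column vectors. -/
def perpSet {m : ℕ} (e : Set (Fin m → D)) : Set (Fin m → D) :=
  { u | ∀ v ∈ e, ∑ i, u i * v i = 0 }

/-- The `p × q` matrix with upper-left block `B` and zeros elsewhere. -/
def pad {m n : ℕ} (p q : ℕ) (B : Matrix (Fin m) (Fin n) D) :
    Matrix (Fin p) (Fin q) D :=
  Matrix.of fun i j =>
    if hi : (i : ℕ) < m then if hj : (j : ℕ) < n then B ⟨i, hi⟩ ⟨j, hj⟩ else 0 else 0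

/-- `φ` is degenerate with respect to `A`. -/
def DegenerateAt {m n p q : ℕ} (φ : Matrix (Fin m) (Fin n) D → Matrix (Fin p) (Fin q) D)
    (A : Matrix (Fin m) (Fin n) D) : Prop :=
  ∃ x : Fin p → D, x ≠ 0 ∧ ∃ y : Fin q → D, y ≠ 0 ∧
    ∀ M : Matrix (Fin m) (Fin n) D, rowRank M ≤ 1 →
      φ (A + M) - φ A ∈ Rvec y ∪ Lvec x

/-- `φ` is degenerate: degenerate with respect to every matrix. -/
def Degenerate {m n p q : ℕ} (φ : Matrix (Fin m) (Fin n) D → Matrix (Fin p) (Fin q) D) :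
    Prop :=
  ∀ A, DegenerateAt φ A

/-- A map (sending `0` to `0`) is degenerate with respect to `0` iff it maps every matrix of
rank at most one into `R(y) ∪ L(ᵗx)` for some nonzero `y`, `x`. -/
def DegZero {m n p q : ℕ} (φ : Matrix (Fin m) (Fin n) D → Matrix (Fin p) (Fin q) D) :
    Prop :=
  ∃ x : Fin p → D, x ≠ 0 ∧ ∃ y : Fin q → D, y ≠ 0 ∧
    ∀ M : Matrix (Fin m) (Fin n) D, rowRank M ≤ 1 → φ M ∈ Rvec y ∪ Lvec x

/-- A standard adjacency preserver. -/
def Standard {m n p q : ℕ} (φ : Matrix (Fin m) (Fin n) D → Matrix (Fin p) (Fin q) D) :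
    Prop :=
  (m ≤ p ∧ n ≤ q ∧ ∃ τ : D ≃+* D, ∃ T : Matrix (Fin p) (Fin p) D,
    ∃ S : Matrix (Fin q) (Fin q) D, ∃ R : Matrix (Fin p) (Fin q) D,
    IsUnit T ∧ IsUnit S ∧ ∀ A, φ A = T * pad p q (A.map τ) * S + R) ∨
  (n ≤ p ∧ m ≤ q ∧ ∃ σ : D → D, Function.Bijective σ ∧ σ 1 = 1 ∧
    (∀ a b, σ (a + b) = σ a + σ b) ∧ (∀ a b, σ (a * b) = σ b * σ a) ∧
    ∃ T : Matrix (Fin p) (Fin p) D, ∃ S : Matrix (Fin q) (Fin q) D,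
    ∃ R : Matrix (Fin p) (Fin q) D, IsUnit T ∧ IsUnit S ∧
    ∀ A, φ A = T * pad p q (A.map σ).transpose * S + R)

/-- A division ring is EAS if every (unital) ring endomorphism of it is surjective. -/
def EAS (D : Type*) [DivisionRing D] : Prop :=
  ∀ f : D →+* D, Function.Surjective f

/-- A set of matrices is adjacent if any two distinct members are adjacent. -/
def IsAdjacentSet {m n : ℕ} (S : Set (Matrix (Fin m) (Fin n) D)) : Prop :=
  ∀ A ∈ S, ∀ B ∈ S, A ≠ B → Adjacent A B

/-! If `A + ᵗu₀ x = ᵗw z` has rank one, then `z` and `x` are linearly independent (otherwise `A`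
would have rank at most one), and `A + ᵗu x = ᵗw z + ᵗ(u - u₀) x` has rank one exactly when
`u - u₀` is a multiple of `w`: otherwise two of its rows are an invertible recombination of `z` and
`x`. Hence the rank-one matrices of `A + R_⟨x⟩` form the line `{ᵗw (z + c x) | c ∈ F}`, which has
`|F|` elements. For `2 × 2` matrices `x` lies in the row space of `A`, and subtracting a suitable
multiple of `x` from one row of `A` leaves a rank-one matrix. The matrices of `R_d` adjacent to `A`
correspond to these under `M ↦ A - M`, and the `L_e` statements are the transposed `R_d` ones. -/

open Module Submodule

theorem Set.ncard_preimage_of_bijective {α β : Type*} {f : α → β} (hf : f.Bijective)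
    (t : Set β) : (f ⁻¹' t).ncard = t.ncard := by
  simp only [Set.ncard_def, Set.encard_preimage_of_bijective hf]

theorem exists_ne_zero_eq_span_singleton {K V : Type*} [DivisionRing K] [AddCommGroup V]
    [Module K V] {S : Submodule K V} (hS : finrank K S = 1) : ∃ v ≠ 0, S = K ∙ v := by
  have hS0 : S ≠ ⊥ := by
    rintro rfl
    simp at hS
  obtain ⟨v, hv, hv0⟩ := exists_mem_ne_zero_of_ne_bot hS0
  exact ⟨v, hv0, eq_span_singleton_of_mem_of_finrank_eq_one hS hv hv0⟩

theorem mem_span_op_singleton_iff {F V : Type*} [Field F] [AddCommGroup V] [Module F V]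
    [Module Fᵐᵒᵖ V] [IsCentralScalar F V] {y v : V} : v ∈ Fᵐᵒᵖ ∙ y ↔ v ∈ F ∙ y := by
  simp only [mem_span_singleton]
  constructor
  · rintro ⟨c, rfl⟩
    exact ⟨c.unop, (op_smul_eq_smul c.unop y).symm⟩
  · rintro ⟨c, rfl⟩
    exact ⟨MulOpposite.op c, op_smul_eq_smul c y⟩

theorem exists_mem_eq_add_iff {G : Type*} [AddCommGroup G] {S : Set G} {a b : G} :
    (∃ c ∈ S, b = a + c) ↔ b - a ∈ S :=
  ⟨by rintro ⟨c, hc, rfl⟩; simpa using hc, fun h => ⟨b - a, h, by abel⟩⟩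

section RowRank

variable {F : Type*} [Field F] {m n : ℕ}

theorem rowRank_eq_rank (A : Matrix (Fin m) (Fin n) F) : rowRank A = A.rank :=
  (rank_eq_finrank_span_row A).symm

theorem rowRank_transpose (A : Matrix (Fin m) (Fin n) F) : rowRank Aᵀ = rowRank A := by
  rw [rowRank_eq_rank, rowRank_eq_rank, rank_transpose]

theorem rowRank_neg (A : Matrix (Fin m) (Fin n) F) : rowRank (-A) = rowRank A := by
  rw [rowRank, rowRank, ← span_neg (Set.range fun i => A i), Set.neg_range]
  rfl

theorem rowRank_eq_zero_iff {A : Matrix (Fin m) (Fin n) F} : rowRank A = 0 ↔ A = 0 := by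
  rw [rowRank, Submodule.finrank_eq_zero, span_eq_bot, Set.forall_mem_range]
  exact ⟨fun h => funext h, fun h i => congrFun h i⟩

theorem rowRank_vecMulVec_le (u : Fin m → F) (x : Fin n → F) : rowRank (vecMulVec u x) ≤ 1 :=
  rowRank_eq_rank (vecMulVec u x) ▸ rank_vecMulVec_le u x

theorem rowRank_vecMulVec {u : Fin m → F} {x : Fin n → F} (hu : u ≠ 0) (hx : x ≠ 0) :
    rowRank (vecMulVec u x) = 1 := by
  refine le_antisymm (rowRank_vecMulVec_le u x) (Nat.one_le_iff_ne_zero.2 fun h => ?_)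
  obtain ⟨i, hi⟩ := Function.ne_iff.1 hu
  obtain ⟨j, hj⟩ := Function.ne_iff.1 hx
  have := congrFun₂ (rowRank_eq_zero_iff.1 h) i j
  simp_all [vecMulVec_apply]

theorem exists_vecMulVec_of_rowRank_eq_one {M : Matrix (Fin m) (Fin n) F} (h : rowRank M = 1) :
    ∃ w z, w ≠ 0 ∧ z ≠ 0 ∧ M = vecMulVec w z := by
  obtain ⟨z, hz, hspan⟩ := finrank_eq_one_iff'.1 h
  choose w hw using fun i => hspan ⟨M i, subset_span (Set.mem_range_self i)⟩
  have hM : M = vecMulVec w z := by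
    ext i j
    simpa [vecMulVec_apply] using (congrFun (congrArg Subtype.val (hw i)) j).symm
  refine ⟨w, z, ?_, fun h0 => hz (Subtype.ext h0), hM⟩
  rintro rfl
  simp [hM, zero_vecMulVec, rowRank_eq_zero_iff.2] at h

theorem exists_mul_sub_mul_ne_zero {w v : Fin m → F} (hw : w ≠ 0) (hv : ¬∃ c : F, v = c • w) :
    ∃ i j, w i * v j - v i * w j ≠ 0 := by
  by_contra! h
  obtain ⟨i, hi⟩ := Function.ne_iff.1 hw
  have hi : w i ≠ 0 := hi
  refine hv ⟨v i / w i, funext fun j => ?_⟩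
  simp only [Pi.smul_apply, smul_eq_mul]
  field_simp
  linear_combination h i j

theorem exists_eq_smul_of_rowRank_vecMulVec_add_vecMulVec_le_one {w v : Fin m → F}
    {z x : Fin n → F} (hzx : LinearIndependent F ![z, x]) (hw : w ≠ 0)
    (h : rowRank (vecMulVec w z + vecMulVec v x) ≤ 1) : ∃ c : F, v = c • w := by
  by_contra hv
  obtain ⟨i, j, hij⟩ := exists_mul_sub_mul_ne_zero hw hv
  have hrows : (vecMulVec w z + vecMulVec v x).submatrix ![i, j] id =
      !![w i, v i; w j, v j] * Matrix.of ![z, x] := by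
    ext k l
    fin_cases k <;> simp [vecMulVec_apply, Matrix.mul_apply, Fin.sum_univ_two]
  have hzx_rank : (Matrix.of ![z, x]).rank = 2 := hzx.rank_matrix
  have := rank_submatrix_le (vecMulVec w z + vecMulVec v x) ![i, j] id
  rw [hrows, rank_mul_eq_right_of_det_ne_zero _ _ (by rwa [det_fin_two_of]), hzx_rank,
    ← rowRank_eq_rank] at this
  omega

end RowRank

def rankOneAddRsub {m n : ℕ} (A : Matrix (Fin m) (Fin n) D) (d : Submodule D (Fin n → D)) :
    Set (Matrix (Fin m) (Fin n) D) :=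
  {M | rowRank M = 1 ∧ ∃ N ∈ Rsub d, M = A + N}

section RankOneAddRsub

variable {F : Type*} [Field F] {m n : ℕ}

theorem mem_Rsub_span_singleton_iff {M : Matrix (Fin m) (Fin n) F} {x : Fin n → F} :
    M ∈ Rsub (F ∙ x) ↔ ∃ u, M = vecMulVec u x := by
  constructor
  · intro h
    choose u hu using fun i => mem_span_singleton.1 (h i)
    exact ⟨u, by ext i j; simp [vecMulVec_apply, ← hu i]⟩
  · rintro ⟨u, rfl⟩ i
    exact mem_span_singleton.2 ⟨u i, by ext j; simp [vecMulVec_apply]⟩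

theorem rankOneAddRsub_eq_range {A : Matrix (Fin m) (Fin n) F} (hA : rowRank A = 2)
    {x : Fin n → F} {u₀ w : Fin m → F} {z : Fin n → F} (hw : w ≠ 0)
    (hB : A + vecMulVec u₀ x = vecMulVec w z) :
    rankOneAddRsub A (F ∙ x) = Set.range fun c : F => vecMulVec w (z + c • x) := by
  have hA_eq : A = vecMulVec w z - vecMulVec u₀ x := eq_sub_of_add_eq hB
  have hA_ne : ∀ u v, A ≠ vecMulVec u v := fun u v h => by
    have := rowRank_vecMulVec_le u v
    rw [← h, hA] at this
    omega
  have hzx : LinearIndependent F ![z, x] := by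
    refine linearIndependent_fin2.2 ⟨fun hx => hA_ne w z ?_, fun a hz => hA_ne (a • w - u₀) x ?_⟩
    · simp only [Matrix.cons_val_one, Matrix.cons_val_fin_one] at hx
      rw [hA_eq, hx, sub_eq_self]
      ext i j
      simp [vecMulVec_apply]
    · simp only [Matrix.cons_val_one, Matrix.cons_val_fin_one, Matrix.cons_val_zero] at hz
      rw [sub_vecMulVec, smul_vecMulVec, ← vecMulVec_smul, hz]
      exact hA_eq
  ext M
  constructor
  · rintro ⟨hM, N, hN, rfl⟩
    obtain ⟨u, rfl⟩ := mem_Rsub_span_singleton_iff.1 hN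
    have hsum : A + vecMulVec u x = vecMulVec w z + vecMulVec (u - u₀) x := by
      rw [hA_eq, sub_vecMulVec]
      abel
    obtain ⟨c, hc⟩ :=
      exists_eq_smul_of_rowRank_vecMulVec_add_vecMulVec_le_one hzx hw (hsum ▸ hM.le)
    exact ⟨c, by dsimp only; rw [hsum, hc, vecMulVec_add, smul_vecMulVec, vecMulVec_smul]⟩
  · rintro ⟨c, rfl⟩
    refine ⟨rowRank_vecMulVec hw fun h => ?_, vecMulVec (u₀ + c • w) x,
      mem_Rsub_span_singleton_iff.2 ⟨_, rfl⟩, ?_⟩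
    · exact (linearIndependent_fin2.1 hzx).2 (-c) (by
        show (-c) • x = z
        rw [neg_smul]
        exact neg_eq_of_add_eq_zero_left h)
    · dsimp only
      rw [hA_eq, add_vecMulVec, vecMulVec_add, smul_vecMulVec, vecMulVec_smul]
      abel

theorem ncard_rankOneAddRsub_of_nonempty [Fintype F] {A : Matrix (Fin m) (Fin n) F}
    (hA : rowRank A = 2) {x : Fin n → F} (hx : x ≠ 0)
    (hne : (rankOneAddRsub A (F ∙ x)).Nonempty) :
    (rankOneAddRsub A (F ∙ x)).ncard = Fintype.card F := by
  obtain ⟨B, hB, N, hN, rfl⟩ := hne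
  obtain ⟨u₀, rfl⟩ := mem_Rsub_span_singleton_iff.1 hN
  obtain ⟨w, z, hw, -, hwz⟩ := exists_vecMulVec_of_rowRank_eq_one hB
  have hwx : vecMulVec w x ≠ 0 := fun h => by
    simpa [h, rowRank_eq_zero_iff.2] using rowRank_vecMulVec hw hx
  rw [rankOneAddRsub_eq_range hA hw hwz, Set.ncard_range_of_injective, Nat.card_eq_fintype_card]
  intro c c' h
  simp only [vecMulVec_add, vecMulVec_smul] at h
  exact smul_left_injective F hwx (add_left_cancel h)

theorem exists_rowRank_add_vecMulVec_eq_one {A : Matrix (Fin 2) (Fin n) F}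
    (hA : rowRank A = 2) {x : Fin n → F} (hx : x ≠ 0)
    (hxA : x ∈ span F (Set.range fun i => A i)) : ∃ u, rowRank (A + vecMulVec u x) = 1 := by
  have hind : LinearIndependent F fun i => A i :=
    linearIndependent_iff_card_eq_finrank_span.2 (by rw [Fintype.card_fin]; exact hA.symm)
  obtain ⟨c, hc⟩ := (mem_span_range_iff_exists_fun F).1 hxA
  rw [Fin.sum_univ_two] at hc
  have hxj : ∀ j, x j = c 0 * A 0 j + c 1 * A 1 j := fun j => by simp [← hc]
  by_cases hc0 : c 0 = 0
  · have hc1 : c 1 ≠ 0 := by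
      rintro h
      apply hx
      rw [← hc, hc0, h, zero_smul, zero_smul, add_zero]
    refine ⟨![0, -(c 1)⁻¹], ?_⟩
    have hrow : A + vecMulVec ![0, -(c 1)⁻¹] x = vecMulVec ![1, 0] (A 0) := by
      ext i j
      fin_cases i <;> simp only [Matrix.add_apply, vecMulVec_apply] <;> simp [hxj, hc0, hc1]
    rw [hrow]
    exact rowRank_vecMulVec (fun h => one_ne_zero (congrFun h 0)) (hind.ne_zero 0)
  · refine ⟨![-(c 0)⁻¹, 0], ?_⟩
    have hrow : A + vecMulVec ![-(c 0)⁻¹, 0] x = vecMulVec ![-(c 0)⁻¹ * c 1, 1] (A 1) := by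
      ext i j
      fin_cases i <;> simp only [Matrix.add_apply, vecMulVec_apply] <;> simp [hxj]
      field_simp
      ring
    rw [hrow]
    exact rowRank_vecMulVec (fun h => one_ne_zero (congrFun h 1)) (hind.ne_zero 1)

theorem rankOneAddRsub_nonempty_of_fin_two {A : Matrix (Fin 2) (Fin 2) F} (hA : rowRank A = 2)
    {x : Fin 2 → F} (hx : x ≠ 0) : (rankOneAddRsub A (F ∙ x)).Nonempty := by
  have hspan : span F (Set.range fun i => A i) = ⊤ :=
    eq_top_of_finrank_eq (by rw [finrank_fin_fun]; exact hA)
  obtain ⟨u, hu⟩ := exists_rowRank_add_vecMulVec_eq_one hA hx (hspan ▸ mem_top)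
  exact ⟨_, hu, _, mem_Rsub_span_singleton_iff.2 ⟨u, rfl⟩, rfl⟩

theorem ncard_rankOneAddRsub [Fintype F] {A : Matrix (Fin m) (Fin n) F}
    (hA : rowRank A = 2) {x : Fin n → F} (hx : x ≠ 0) :
    ((rankOneAddRsub A (F ∙ x)).ncard = 0 ∨
        (rankOneAddRsub A (F ∙ x)).ncard = Fintype.card F) ∧
      (m = 2 ∧ n = 2 → (rankOneAddRsub A (F ∙ x)).ncard = Fintype.card F) := by
  refine ⟨?_, ?_⟩
  · rcases (rankOneAddRsub A (F ∙ x)).eq_empty_or_nonempty with h | h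
    · exact .inl (h ▸ Set.ncard_empty _)
    · exact .inr (ncard_rankOneAddRsub_of_nonempty hA hx h)
  · rintro ⟨rfl, rfl⟩
    exact ncard_rankOneAddRsub_of_nonempty hA hx (rankOneAddRsub_nonempty_of_fin_two hA hx)

end RankOneAddRsub

section Transfer

variable {F : Type*} [Field F] {m n : ℕ}

theorem neg_mem_Rsub_iff {d : Submodule F (Fin n → F)} {M : Matrix (Fin m) (Fin n) F} :
    -M ∈ Rsub d ↔ M ∈ Rsub d :=
  forall_congr' fun _ => neg_mem_iff

theorem mem_Lsub_iff_transpose_mem_Rsub {e : Submodule Fᵐᵒᵖ (Fin m → F)}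
    {d : Submodule F (Fin m → F)} (hed : ∀ v, v ∈ e ↔ v ∈ d) {M : Matrix (Fin m) (Fin n) F} :
    M ∈ Lsub e ↔ Mᵀ ∈ Rsub d :=
  forall_congr' fun _ => hed _

theorem adjacent_transpose_iff {M A : Matrix (Fin m) (Fin n) F} :
    Adjacent Mᵀ Aᵀ ↔ Adjacent M A := by
  rw [Adjacent, Adjacent, ← transpose_sub, rowRank_transpose]

theorem ncard_Rsub_adjacent (A : Matrix (Fin m) (Fin n) F) (d : Submodule F (Fin n → F)) :
    {M | M ∈ Rsub d ∧ Adjacent M A}.ncard = (rankOneAddRsub A d).ncard := by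
  have h : rankOneAddRsub A d = (A - ·) ⁻¹' {M | M ∈ Rsub d ∧ Adjacent M A} := by
    ext M
    rw [rankOneAddRsub, Set.mem_ofPred_eq, exists_mem_eq_add_iff, Set.mem_preimage,
      Set.mem_ofPred_eq, Adjacent, sub_sub_cancel_left, rowRank_neg, ← neg_sub, neg_mem_Rsub_iff,
      and_comm]
  rw [h]
  exact (Set.ncard_preimage_of_bijective (Equiv.subLeft A).bijective _).symm

theorem ncard_Lsub_adjacent {e : Submodule Fᵐᵒᵖ (Fin m → F)} {d : Submodule F (Fin m → F)}
    (hed : ∀ v, v ∈ e ↔ v ∈ d) (A : Matrix (Fin m) (Fin n) F) :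
    {M | M ∈ Lsub e ∧ Adjacent M A}.ncard = {M | M ∈ Rsub d ∧ Adjacent M Aᵀ}.ncard := by
  have h : {M | M ∈ Lsub e ∧ Adjacent M A} =
      transpose ⁻¹' {M | M ∈ Rsub d ∧ Adjacent M Aᵀ} := by
    ext M
    rw [Set.mem_ofPred_eq, Set.mem_preimage, Set.mem_ofPred_eq,
      mem_Lsub_iff_transpose_mem_Rsub hed, adjacent_transpose_iff]
  rw [h]
  exact Set.ncard_preimage_of_bijective (transposeAddEquiv _ _ F).bijective _

theorem ncard_rankOne_add_Lsub {e : Submodule Fᵐᵒᵖ (Fin m → F)} {d : Submodule F (Fin m → F)}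
    (hed : ∀ v, v ∈ e ↔ v ∈ d) (A : Matrix (Fin m) (Fin n) F) :
    {M | rowRank M = 1 ∧ ∃ N ∈ Lsub (n := n) e, M = A + N}.ncard =
      (rankOneAddRsub Aᵀ d).ncard := by
  have h : {M | rowRank M = 1 ∧ ∃ N ∈ Lsub (n := n) e, M = A + N} =
      transpose ⁻¹' rankOneAddRsub Aᵀ d := by
    ext M
    rw [Set.mem_ofPred_eq, Set.mem_preimage, rankOneAddRsub, Set.mem_ofPred_eq,
      exists_mem_eq_add_iff, exists_mem_eq_add_iff, ← transpose_sub,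
      mem_Lsub_iff_transpose_mem_Rsub hed, rowRank_transpose]
  rw [h]
  exact Set.ncard_preimage_of_bijective (transposeAddEquiv _ _ F).bijective _

end Transfer

theorem stmt17_general {F : Type*} [Field F] [Fintype F] (m n : ℕ)
    (A : Matrix (Fin m) (Fin n) F) (hA : rowRank A = 2)
    (d : Submodule F (Fin n → F)) (hd : Module.finrank F d = 1)
    (e : Submodule Fᵐᵒᵖ (Fin m → F)) (he : Module.finrank Fᵐᵒᵖ e = 1) :
    (({M : Matrix (Fin m) (Fin n) F | M ∈ Rsub d ∧ Adjacent M A}.ncard = 0 ∨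
      {M : Matrix (Fin m) (Fin n) F | M ∈ Rsub d ∧ Adjacent M A}.ncard =
        Fintype.card F) ∧
      (m = 2 ∧ n = 2 →
        {M : Matrix (Fin m) (Fin n) F | M ∈ Rsub d ∧ Adjacent M A}.ncard =
          Fintype.card F)) ∧
    (({M : Matrix (Fin m) (Fin n) F | M ∈ Lsub e ∧ Adjacent M A}.ncard = 0 ∨
      {M : Matrix (Fin m) (Fin n) F | M ∈ Lsub e ∧ Adjacent M A}.ncard =
        Fintype.card F) ∧
      (m = 2 ∧ n = 2 →
        {M : Matrix (Fin m) (Fin n) F | M ∈ Lsub e ∧ Adjacent M A}.ncard =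
          Fintype.card F)) ∧
    (({M : Matrix (Fin m) (Fin n) F |
        rowRank M = 1 ∧ ∃ N ∈ Rsub (m := m) d, M = A + N}.ncard = 0 ∨
      {M : Matrix (Fin m) (Fin n) F |
        rowRank M = 1 ∧ ∃ N ∈ Rsub (m := m) d, M = A + N}.ncard = Fintype.card F) ∧
      (m = 2 ∧ n = 2 →
        {M : Matrix (Fin m) (Fin n) F |
          rowRank M = 1 ∧ ∃ N ∈ Rsub (m := m) d, M = A + N}.ncard =
            Fintype.card F)) ∧
    (({M : Matrix (Fin m) (Fin n) F |
        rowRank M = 1 ∧ ∃ N ∈ Lsub (n := n) e, M = A + N}.ncard = 0 ∨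
      {M : Matrix (Fin m) (Fin n) F |
        rowRank M = 1 ∧ ∃ N ∈ Lsub (n := n) e, M = A + N}.ncard = Fintype.card F) ∧
      (m = 2 ∧ n = 2 →
        {M : Matrix (Fin m) (Fin n) F |
          rowRank M = 1 ∧ ∃ N ∈ Lsub (n := n) e, M = A + N}.ncard =
            Fintype.card F)) := by
  obtain ⟨x, hx, rfl⟩ := exists_ne_zero_eq_span_singleton hd
  obtain ⟨y, hy, rfl⟩ := exists_ne_zero_eq_span_singleton he
  have hyy : ∀ v, v ∈ Fᵐᵒᵖ ∙ y ↔ v ∈ F ∙ y := fun _ => mem_span_op_singleton_iff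
  have hR := ncard_rankOneAddRsub hA hx
  have hL := ncard_rankOneAddRsub ((rowRank_transpose A).trans hA) hy
  rw [ncard_Rsub_adjacent, ncard_Lsub_adjacent hyy, ncard_Rsub_adjacent,
    ncard_rankOne_add_Lsub hyy]
  exact ⟨hR, ⟨hL.1, hL.2 ∘ And.symm⟩, hR, hL.1, hL.2 ∘ And.symm⟩

/-- Lemma 4.2. -/
theorem stmt17 {F : Type*} [Field F] [Fintype F] (m n : ℕ) (hm : 0 < m) (hn : 0 < n)
    (A : Matrix (Fin m) (Fin n) F) (hA : rowRank A = 2)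
    (d : Submodule F (Fin n → F)) (hd : Module.finrank F d = 1)
    (e : Submodule Fᵐᵒᵖ (Fin m → F)) (he : Module.finrank Fᵐᵒᵖ e = 1) :
    (({M : Matrix (Fin m) (Fin n) F | M ∈ Rsub d ∧ Adjacent M A}.ncard = 0 ∨
      {M : Matrix (Fin m) (Fin n) F | M ∈ Rsub d ∧ Adjacent M A}.ncard =
        Fintype.card F) ∧
      (m = 2 ∧ n = 2 →
        {M : Matrix (Fin m) (Fin n) F | M ∈ Rsub d ∧ Adjacent M A}.ncard =
          Fintype.card F)) ∧
    (({M : Matrix (Fin m) (Fin n) F | M ∈ Lsub e ∧ Adjacent M A}.ncard = 0 ∨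
      {M : Matrix (Fin m) (Fin n) F | M ∈ Lsub e ∧ Adjacent M A}.ncard =
        Fintype.card F) ∧
      (m = 2 ∧ n = 2 →
        {M : Matrix (Fin m) (Fin n) F | M ∈ Lsub e ∧ Adjacent M A}.ncard =
          Fintype.card F)) ∧
    (({M : Matrix (Fin m) (Fin n) F |
        rowRank M = 1 ∧ ∃ N ∈ Rsub (m := m) d, M = A + N}.ncard = 0 ∨
      {M : Matrix (Fin m) (Fin n) F |
        rowRank M = 1 ∧ ∃ N ∈ Rsub (m := m) d, M = A + N}.ncard = Fintype.card F) ∧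
      (m = 2 ∧ n = 2 →
        {M : Matrix (Fin m) (Fin n) F |
          rowRank M = 1 ∧ ∃ N ∈ Rsub (m := m) d, M = A + N}.ncard =
            Fintype.card F)) ∧
    (({M : Matrix (Fin m) (Fin n) F |
        rowRank M = 1 ∧ ∃ N ∈ Lsub (n := n) e, M = A + N}.ncard = 0 ∨
      {M : Matrix (Fin m) (Fin n) F |
        rowRank M = 1 ∧ ∃ N ∈ Lsub (n := n) e, M = A + N}.ncard = Fintype.card F) ∧
      (m = 2 ∧ n = 2 →
        {M : Matrix (Fin m) (Fin n) F |
          rowRank M = 1 ∧ ∃ N ∈ Lsub (n := n) e, M = A + N}.ncard =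
            Fintype.card F)) :=
  stmt17_general m n A hA d hd e he
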